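/- Let n ∈ ℕ, n ≥ 1, m ∈ ℕ with m ≤ n, and define for z ∈ ℂ: Δ̃(z) = z^n + ∑_{k=0}^{n-1} b_k z^k + e^{-z} ∑_{k=0}^{m} β_k z^k with b_k = (-1)^{n-k} (n!/k!) C(m+n-k, m) and β_k = (-1)^{n-1} (m+n-k)!/(k!(m-k)!). Then for every z ∈ ℂ, Δ̃(z) = (z^{m+n+1}/m!) ∫₀¹ t^m (1-t)^n e^{-zt} dt. -/

import Mathlib

/-!
With `p = X ^ m * (1 - X) ^ n`, of degree `m + n`, the polynomial
`Q = ∑_{k ≤ m + n} z ^ k p^{(m + n - k)}` satisfies `z Q - Q' = z ^ (m + n + 1) p`, so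
`-exp (-z t) Q t` is a primitive of `z ^ (m + n + 1) p t exp (-z t)`, and `z ^ (m + n + 1)` times
the integral equals `Q 0 - exp (-z) Q 1`. The derivatives of `p` at `0` and `1` are read off its
Taylor expansions there, `X ^ m (1 - X) ^ n` and `(-1) ^ n X ^ n (X + 1) ^ m`, which give `Q 0`
and `Q 1` as `m !` times the two polynomial factors of the left-hand side.
-/

open Finset Polynomial Nat

namespace Polynomial

variable {R : Type*}

theorem eval_iterate_derivative_eq_factorial_mul_coeff_taylor [CommSemiring R] (p : R[X]) (r : R)
    (j : ℕ) : (derivative^[j] p).eval r = j ! * (taylor r p).coeff j := by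
  rw [taylor_coeff, ← factorial_smul_hasseDeriv]
  simp [nsmul_eq_mul]

theorem coeff_one_sub_X_pow [CommRing R] (n i : ℕ) :
    ((1 - X : R[X]) ^ n).coeff i = (-1) ^ i * n.choose i := by
  have h : (1 - X : R[X]) ^ n = C ((-1) ^ n) * (X + C (-1)) ^ n := by
    rw [C_pow, ← mul_pow, C_neg, C_1]; ring
  rw [h, coeff_C_mul, coeff_X_add_C_pow]
  rcases le_or_gt i n with hi | hi
  · rw [← mul_assoc, ← pow_add, show n + (n - i) = i + 2 * (n - i) by omega, pow_add, pow_mul]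
    simp
  · simp [choose_eq_zero_of_lt hi]

theorem taylor_one_X_pow_mul_one_sub_X_pow [CommRing R] (m n : ℕ) :
    taylor 1 (X ^ m * (1 - X) ^ n : R[X]) = C ((-1) ^ n) * (X ^ n * (X + 1) ^ m) := by
  simp only [taylor_apply, mul_comp, pow_comp, sub_comp, one_comp, X_comp, C_1, C_pow, C_neg]
  ring

noncomputable def expIntegralPoly [CommSemiring R] (z : R) (d : ℕ) (p : R[X]) : R[X] :=
  ∑ k ∈ range (d + 1), C z ^ k * derivative^[d - k] p

theorem C_mul_expIntegralPoly_sub_derivative [CommRing R] (z : R) {d : ℕ} {p : R[X]}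
    (hp : p.natDegree ≤ d) :
    C z * expIntegralPoly z d p - derivative (expIntegralPoly z d p) = C z ^ (d + 1) * p := by
  have htel := sum_range_sub (fun k => C z ^ k * derivative^[d + 1 - k] p) (d + 1)
  simp only [Nat.sub_self, Function.iterate_zero, id, pow_zero, one_mul, Nat.sub_zero,
    iterate_derivative_eq_zero (Nat.lt_succ_of_le hp), sub_zero] at htel
  rw [← htel, expIntegralPoly, mul_sum, derivative_sum, ← sum_sub_distrib]
  refine sum_congr rfl fun k hk => ?_
  have hk : k ≤ d := Nat.lt_succ_iff.mp (mem_range.mp hk)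
  rw [derivative_mul, derivative_pow, derivative_C, ← Function.iterate_succ_apply' derivative,
    show d + 1 - (k + 1) = d - k by omega, show d + 1 - k = (d - k).succ by omega]
  ring

theorem eval_expIntegralPoly [CommSemiring R] (z c : R) (d : ℕ) (p : R[X]) :
    (expIntegralPoly z d p).eval c =
      ∑ k ∈ range (d + 1), (d - k)! * (taylor c p).coeff (d - k) * z ^ k := by
  simp only [expIntegralPoly, eval_finsetSum, eval_mul, eval_pow, eval_C,
    eval_iterate_derivative_eq_factorial_mul_coeff_taylor]
  exact sum_congr rfl fun k _ => mul_comm _ _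

variable {K : Type*} [Field K] [CharZero K]

theorem eval_zero_expIntegralPoly_X_pow_mul_one_sub_X_pow (z : K) (m n : ℕ) :
    (expIntegralPoly z (m + n) (X ^ m * (1 - X) ^ n)).eval 0 =
      m ! * (z ^ n + ∑ k ∈ range n,
        (-1) ^ (n - k) * ((n ! : K) / k !) * ((m + n - k).choose m : K) * z ^ k) := by
  have hvanish : ∀ k ∈ range (m + n + 1), k ∉ range (n + 1) →
      ((m + n - k)! * (X ^ m * (1 - X) ^ n : K[X]).coeff (m + n - k) * z ^ k : K) = 0 := by
    intro k hk hk'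
    rw [coeff_X_pow_mul', if_neg (by simp at hk hk'; omega), mul_zero, zero_mul]
  rw [eval_expIntegralPoly, taylor_zero, ← sum_subset (range_subset_range.2 (by omega)) hvanish,
    sum_range_succ, add_comm, mul_add, mul_sum]
  congr 1
  · simp [coeff_X_pow_mul', coeff_one_sub_X_pow]
  refine sum_congr rfl fun k hk => ?_
  have hk : k < n := mem_range.mp hk
  rw [coeff_X_pow_mul', if_pos (by omega), show m + n - k - m = n - k by omega,
    coeff_one_sub_X_pow, choose_symm hk.le, cast_choose K hk.le,
    cast_choose K (show m ≤ m + n - k by omega), show m + n - k - m = n - k by omega]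
  have hm : (m ! : K) ≠ 0 := cast_ne_zero.2 (factorial_ne_zero m)
  field_simp

theorem eval_one_expIntegralPoly_X_pow_mul_one_sub_X_pow (z : K) (m n : ℕ) :
    (expIntegralPoly z (m + n) (X ^ m * (1 - X) ^ n)).eval 1 = m ! *
      ∑ k ∈ range (m + 1), (-1) ^ n * ((m + n - k)! : K) / (k ! * (m - k)!) * z ^ k := by
  have hvanish : ∀ k ∈ range (m + n + 1), k ∉ range (m + 1) →
      ((m + n - k)! * (taylor 1 (X ^ m * (1 - X) ^ n : K[X])).coeff (m + n - k) * z ^ k : K)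
        = 0 := by
    intro k hk hk'
    rw [taylor_one_X_pow_mul_one_sub_X_pow, coeff_C_mul, coeff_X_pow_mul',
      if_neg (by simp at hk hk'; omega), mul_zero, mul_zero, zero_mul]
  rw [eval_expIntegralPoly, ← sum_subset (range_subset_range.2 (by omega)) hvanish, mul_sum]
  refine sum_congr rfl fun k hk => ?_
  have hk : k ≤ m := mem_range_succ_iff.mp hk
  rw [taylor_one_X_pow_mul_one_sub_X_pow, coeff_C_mul, coeff_X_pow_mul',
    if_pos (by omega), show m + n - k - n = m - k by omega, coeff_X_add_one_pow,
    cast_choose K (Nat.sub_le m k), Nat.sub_sub_self hk]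
  field_simp

end Polynomial

theorem integral_eval_mul_cexp_neg_mul {q r : ℂ[X]} {z : ℂ} (h : C z * q - derivative q = r)
    (a b : ℝ) :
    ∫ t in a..b, r.eval (t : ℂ) * Complex.exp (-z * t) =
      Complex.exp (-z * a) * q.eval (a : ℂ) - Complex.exp (-z * b) * q.eval (b : ℂ) := by
  have hderiv : ∀ w : ℂ, HasDerivAt (fun w => -(Complex.exp (-z * w) * q.eval w))
      (r.eval w * Complex.exp (-z * w)) w := by
    intro w
    have hexp : HasDerivAt (fun w => Complex.exp (-z * w)) (Complex.exp (-z * w) * -z) w := by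
      simpa using ((hasDerivAt_id w).const_mul (-z)).cexp
    refine (hexp.mul (q.hasDerivAt w)).neg.congr_deriv ?_
    rw [← h, eval_sub, eval_mul, eval_C]
    ring
  have hcont : Continuous fun t : ℝ => r.eval (t : ℂ) * Complex.exp (-z * t) := by fun_prop
  rw [intervalIntegral.integral_eq_sub_of_hasDerivAt (fun t _ => (hderiv t).comp_ofReal)
    (hcont.intervalIntegrable a b)]
  ring

theorem stmt_7_general (n m : ℕ) (hn : 1 ≤ n)
    (b : ℕ → ℂ) (β : ℕ → ℂ)
    (hb : ∀ k, b k = (-1 : ℂ) ^ (n - k) * ((n.factorial : ℂ) / (k.factorial : ℂ)) *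
      ((m + n - k).choose m : ℂ))
    (hβ : ∀ k, β k = (-1 : ℂ) ^ (n - 1) * ((m + n - k).factorial : ℂ) /
      ((k.factorial : ℂ) * ((m - k).factorial : ℂ)))
    (z : ℂ) :
    z ^ n + (∑ k ∈ Finset.range n, b k * z ^ k)
        + Complex.exp (-z) * ∑ k ∈ Finset.range (m + 1), β k * z ^ k =
      (z ^ (m + n + 1) / (m.factorial : ℂ)) *
        ∫ t in (0:ℝ)..1, (t : ℂ) ^ m * (1 - (t : ℂ)) ^ n * Complex.exp (-z * t) := by
  have hdeg : (X ^ m * (1 - X) ^ n : ℂ[X]).natDegree ≤ m + n := by compute_degree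
  have hintegral :=
    integral_eval_mul_cexp_neg_mul (C_mul_expIntegralPoly_sub_derivative z hdeg) 0 1
  simp only [eval_mul, eval_pow, eval_C, eval_X, eval_sub, eval_one, mul_assoc (z ^ (m + n + 1)),
    intervalIntegral.integral_const_mul, Complex.ofReal_zero, Complex.ofReal_one, mul_zero,
    mul_one, Complex.exp_zero, one_mul, eval_zero_expIntegralPoly_X_pow_mul_one_sub_X_pow,
    eval_one_expIntegralPoly_X_pow_mul_one_sub_X_pow] at hintegral
  have hsign : (-1 : ℂ) ^ n = -(-1) ^ (n - 1) := by
    conv_lhs => rw [← Nat.sub_add_cancel hn, pow_succ]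
    ring
  simp only [hsign, neg_mul, neg_div, sum_neg_distrib] at hintegral
  simp only [hb, hβ, neg_mul]
  rw [div_mul_eq_mul_div, hintegral, eq_div_iff (Nat.cast_ne_zero.2 (factorial_ne_zero m))]
  ring

theorem stmt_7 (n m : ℕ) (hn : 1 ≤ n) (hm : m ≤ n)
    (b : ℕ → ℂ) (β : ℕ → ℂ)
    (hb : ∀ k, b k = (-1 : ℂ) ^ (n - k) * ((n.factorial : ℂ) / (k.factorial : ℂ)) *
      ((m + n - k).choose m : ℂ))
    (hβ : ∀ k, β k = (-1 : ℂ) ^ (n - 1) * ((m + n - k).factorial : ℂ) /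
      ((k.factorial : ℂ) * ((m - k).factorial : ℂ)))
    (z : ℂ) :
    z ^ n + (∑ k ∈ Finset.range n, b k * z ^ k)
        + Complex.exp (-z) * ∑ k ∈ Finset.range (m + 1), β k * z ^ k =
      (z ^ (m + n + 1) / (m.factorial : ℂ)) *
        ∫ t in (0:ℝ)..1, (t : ℂ) ^ m * (1 - (t : ℂ)) ^ n * Complex.exp (-z * t) :=
  stmt_7_general n m hn b β hb hβ z
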